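/- Let c > s > 0 and N ≥ 2. Let x₁, …, x_N : (-∞, ∞) → ℝ be uniformly Lipschitz with constant s, solving the 1D Hegselmann-Krause system with finite propagation speed: ẋ_i(t) = (1/(N-1))·Σ_j ψ(|x_j(t-τ_{ij}(t)) - x_i(t)|)·(x_j(t-τ_{ij}(t)) - x_i(t)), where c·τ_{ij}(t) = |x_i(t) - x_j(t-τ_{ij}(t))|, with ψ : [0,∞) → [0,∞) continuous, ψ(r) > 0 for r > 0, sup_{r>0} ψ(r)·r ≤ s, and with initial ordering x₁(0) ≤ … ≤ x_N(0) preserved in time. Then the diameter d_x(t) = x_N(t) - x₁(t) converges to 0 as t → ∞. -/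

import Mathlib

/-!
Information travels at speed `c`, faster than any agent moves (`s`), so the extreme agents
never receive a signal from outside `[x₁(t), x_N(t)]`: every term of their velocity points
inwards and the diameter `d` is non-increasing. The top agent's pull towards the delayed
bottom agent is `ψ(D) D` with `D` comparable to `d` (`cd ≤ (c+s)D` and `(c-s)D ≤ cd`).
If `d` stayed above some `ε > 0`, then `D` would stay in a compact subinterval of `(0, ∞)`,
on which `ψ(r) r` has a positive minimum, so `d` would decrease linearly and become negative.
-/

open Filter Set Topology

theorem sub_le_mul_sub_of_hasDerivAt_le {f f' : ℝ → ℝ} {t₀ C : ℝ}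
    (hf : ∀ t, t₀ ≤ t → HasDerivAt f (f' t) t) (hC : ∀ t, t₀ ≤ t → f' t ≤ C)
    {a b : ℝ} (ha : t₀ ≤ a) (hab : a ≤ b) : f b - f a ≤ C * (b - a) :=
  (convex_Ici t₀).image_sub_le_mul_sub_of_deriv_le
    (fun t ht => (hf t ht).continuousAt.continuousWithinAt)
    (fun t ht => (hf t (interior_subset ht)).differentiableAt.differentiableWithinAt)
    (fun t ht => (hf t (interior_subset ht)).deriv ▸ hC t (interior_subset ht))
    a ha b (ha.trans hab) hab

section Decay

variable {d d' D φ : ℝ → ℝ} {α β : ℝ}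

theorem exists_lt_of_hasDerivAt_le_neg_comparable (hα : 0 < α) (hφc : ContinuousOn φ (Ioi 0))
    (hφpos : ∀ r, 0 < r → 0 < φ r) (hd : ∀ t, 0 ≤ t → HasDerivAt d (d' t) t)
    (hd' : ∀ t, 0 ≤ t → d' t ≤ -φ (D t)) (hanti : AntitoneOn d (Ici 0))
    (hdD : ∀ t, 0 ≤ t → d t ≤ α * D t) (hDd : ∀ t, 0 ≤ t → D t ≤ β * d t)
    {ε : ℝ} (hε : 0 < ε) : ∃ T, 0 ≤ T ∧ d T < ε := by
  by_contra! hge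
  have hD_ge : ∀ t, 0 ≤ t → ε / α ≤ D t := fun t ht => by
    rw [div_le_iff₀' hα]; exact (hge t ht).trans (hdD t ht)
  have hβ : 0 ≤ β := by
    nlinarith [hDd 0 le_rfl, hD_ge 0 le_rfl, hge 0 le_rfl, div_pos hε hα]
  have hD_mem : ∀ t, 0 ≤ t → D t ∈ Icc (ε / α) (β * d 0) := fun t ht =>
    ⟨hD_ge t ht, (hDd t ht).trans <|
      mul_le_mul_of_nonneg_left (hanti self_mem_Ici (mem_Ici.2 ht) ht) hβ⟩
  obtain ⟨r₀, hr₀, hmin⟩ := isCompact_Icc.exists_isMinOn ⟨D 0, hD_mem 0 le_rfl⟩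
    (hφc.mono fun r hr => (div_pos hε hα).trans_le hr.1)
  have hm : 0 < φ r₀ := hφpos r₀ ((div_pos hε hα).trans_le hr₀.1)
  have hT : 0 ≤ d 0 / φ r₀ := div_nonneg (hε.le.trans (hge 0 le_rfl)) hm.le
  have hdecay := sub_le_mul_sub_of_hasDerivAt_le hd
    (fun t ht => (hd' t ht).trans (neg_le_neg (hmin (hD_mem t ht)))) le_rfl hT
  rw [sub_zero, neg_mul, mul_div_cancel₀ _ hm.ne'] at hdecay
  linarith [hge _ hT]

theorem tendsto_zero_of_hasDerivAt_le_neg_comparable (hα : 0 < α) (hφc : ContinuousOn φ (Ioi 0))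
    (hφnn : ∀ r, 0 ≤ r → 0 ≤ φ r) (hφpos : ∀ r, 0 < r → 0 < φ r)
    (hd : ∀ t, 0 ≤ t → HasDerivAt d (d' t) t) (hd' : ∀ t, 0 ≤ t → d' t ≤ -φ (D t))
    (hd0 : ∀ t, 0 ≤ t → 0 ≤ d t)
    (hdD : ∀ t, 0 ≤ t → d t ≤ α * D t) (hDd : ∀ t, 0 ≤ t → D t ≤ β * d t) :
    Tendsto d atTop (𝓝 0) := by
  have hanti : AntitoneOn d (Ici 0) := fun a ha b _ hab => by
    have hD0 : ∀ t, 0 ≤ t → 0 ≤ D t := fun t ht =>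
      (mul_nonneg_iff_of_pos_left hα).1 ((hd0 t ht).trans (hdD t ht))
    have := sub_le_mul_sub_of_hasDerivAt_le hd
      (fun t ht => (hd' t ht).trans (neg_nonpos.2 (hφnn _ (hD0 t ht)))) ha hab
    linarith
  refine tendsto_order.2 ⟨fun a ha => eventually_atTop.2 ⟨0, fun t ht => ha.trans_le (hd0 t ht)⟩,
    fun ε hε => ?_⟩
  obtain ⟨T, hT0, hT⟩ := exists_lt_of_hasDerivAt_le_neg_comparable hα hφc hφpos hd hd' hanti hdD hDd hε
  exact eventually_atTop.2 ⟨T, fun t ht => (hanti hT0 (hT0.trans ht) ht).trans_lt hT⟩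

end Decay

section Delay

variable {y : ℝ → ℝ} {a c s t τ : ℝ}

theorem abs_sub_delay_le (hlip : ∀ a b, |y a - y b| ≤ s * |a - b|) (hτ : 0 ≤ τ) :
    |y (t - τ) - y t| ≤ s * τ := by
  simpa [abs_of_nonneg hτ] using hlip (t - τ) t

theorem delay_le_of_le (hsc : s < c) (hlip : ∀ a b, |y a - y b| ≤ s * |a - b|) (hτ0 : 0 ≤ τ)
    (hτ : c * τ = |a - y (t - τ)|) (hy : y t ≤ a) : y (t - τ) ≤ a := by
  by_contra! h
  rw [abs_of_neg (sub_neg.2 h)] at hτ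
  have hs := (abs_le.1 (abs_sub_delay_le (t := t) hlip hτ0)).2
  obtain rfl : τ = 0 := by nlinarith
  simp only [sub_zero] at h
  linarith

theorem le_delay_of_le (hsc : s < c) (hlip : ∀ a b, |y a - y b| ≤ s * |a - b|) (hτ0 : 0 ≤ τ)
    (hτ : c * τ = |a - y (t - τ)|) (hy : a ≤ y t) : a ≤ y (t - τ) := by
  by_contra! h
  rw [abs_of_pos (sub_pos.2 h)] at hτ
  have hs := (abs_le.1 (abs_sub_delay_le (t := t) hlip hτ0)).1
  obtain rfl : τ = 0 := by nlinarith
  simp only [sub_zero] at h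
  linarith

theorem sub_le_mul_sub_delay (hc : 0 < c) (hlip : ∀ a b, |y a - y b| ≤ s * |a - b|)
    (hτ0 : 0 ≤ τ) (hτ : c * τ = a - y (t - τ)) :
    a - y t ≤ (c + s) / c * (a - y (t - τ)) := by
  have hs := (abs_le.1 (abs_sub_delay_le (t := t) hlip hτ0)).2
  rw [div_mul_eq_mul_div, le_div_iff₀ hc]
  linear_combination c * hs + s * hτ

theorem sub_delay_le_mul_sub (hc : 0 < c) (hsc : s < c) (hlip : ∀ a b, |y a - y b| ≤ s * |a - b|)
    (hτ0 : 0 ≤ τ) (hτ : c * τ = a - y (t - τ)) :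
    a - y (t - τ) ≤ c / (c - s) * (a - y t) := by
  have hs := (abs_le.1 (abs_sub_delay_le (t := t) hlip hτ0)).1
  rw [div_mul_eq_mul_div, le_div_iff₀ (sub_pos.2 hsc)]
  linear_combination c * hs + s * hτ

end Delay

theorem sum_mul_le_of_nonpos {ι : Type*} [Fintype ι] {ψ : ℝ → ℝ} (hψ : ∀ r, 0 ≤ r → 0 ≤ ψ r)
    {u : ι → ℝ} (hu : ∀ j, u j ≤ 0) (k : ι) : ∑ j, ψ |u j| * u j ≤ ψ |u k| * u k := by
  simpa using Finset.sum_le_sum_of_subset_of_nonpos' (Finset.subset_univ {k})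
    fun j _ _ => mul_nonpos_of_nonneg_of_nonpos (hψ _ (abs_nonneg _)) (hu j)

/-- Main 1D asymptotic consensus theorem for the Hegselmann-Krause model with
finite speed of information propagation: the diameter d_x(t) = x_N(t) - x₁(t)
converges to 0 as t → ∞. -/
theorem stmt_11 (c s : ℝ) (hs : 0 < s) (hsc : s < c) (N : ℕ) (hN : 2 ≤ N)
    (ψ : ℝ → ℝ) (hψc : ContinuousOn ψ (Set.Ici 0))
    (hψnn : ∀ r : ℝ, 0 ≤ r → 0 ≤ ψ r)
    (hψpos : ∀ r : ℝ, 0 < r → 0 < ψ r)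
    (x : Fin N → ℝ → ℝ) (τ : Fin N → Fin N → ℝ → ℝ)
    (hlip : ∀ (i : Fin N) (a b : ℝ), |x i a - x i b| ≤ s * |a - b|)
    (hτ0 : ∀ (i j : Fin N) (t : ℝ), 0 ≤ τ i j t)
    (hτ : ∀ (i j : Fin N) (t : ℝ), c * τ i j t = |x i t - x j (t - τ i j t)|)
    (hode : ∀ (i : Fin N) (t : ℝ), 0 ≤ t →
      HasDerivAt (x i)
        (((N : ℝ) - 1)⁻¹ * ∑ j : Fin N,
          ψ (|x j (t - τ i j t) - x i t|) * (x j (t - τ i j t) - x i t)) t)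
    (horder : ∀ (t : ℝ), 0 ≤ t → ∀ i j : Fin N, i ≤ j → x i t ≤ x j t) :
    Filter.Tendsto (fun t => x ⟨N - 1, by omega⟩ t - x ⟨0, by omega⟩ t)
      Filter.atTop (nhds 0) := by
  have hc : 0 < c := hs.trans hsc
  have hκ : 0 < ((N : ℝ) - 1)⁻¹ := inv_pos.2 (by linarith [(Nat.ofNat_le_cast.2 hN : (2 : ℝ) ≤ N)])
  set top : Fin N := ⟨N - 1, by omega⟩
  set bot : Fin N := ⟨0, by omega⟩
  have hub : ∀ t, 0 ≤ t → ∀ j, x j (t - τ top j t) ≤ x top t := fun t ht j =>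
    delay_le_of_le hsc (hlip j) (hτ0 top j t) (hτ top j t)
      (horder t ht j top (Fin.le_def.2 (Nat.le_sub_one_of_lt j.isLt)))
  have hlb : ∀ t, 0 ≤ t → ∀ j, x bot t ≤ x j (t - τ bot j t) := fun t ht j =>
    le_delay_of_le hsc (hlip j) (hτ0 bot j t) (hτ bot j t)
      (horder t ht bot j (Fin.le_def.2 (Nat.zero_le _)))
  have hτD : ∀ t, 0 ≤ t → c * τ top bot t = x top t - x bot (t - τ top bot t) := fun t ht => by
    rw [hτ, abs_of_nonneg (sub_nonneg.2 (hub t ht bot))]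
  refine tendsto_zero_of_hasDerivAt_le_neg_comparable (D := fun t => x top t - x bot (t - τ top bot t))
    (φ := fun r => ((N : ℝ) - 1)⁻¹ * (ψ r * r)) (div_pos (add_pos hc hs) hc)
    ((continuousOn_const.mul (hψc.mul continuousOn_id)).mono Ioi_subset_Ici_self)
    (fun r hr => mul_nonneg hκ.le (mul_nonneg (hψnn r hr) hr))
    (fun r hr => mul_pos hκ (mul_pos (hψpos r hr) hr))
    (fun t ht => (hode top t ht).sub (hode bot t ht)) (fun t ht => ?_)
    (fun t ht => sub_nonneg.2 (horder t ht bot top (Fin.le_def.2 (Nat.zero_le _))))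
    (fun t ht => sub_le_mul_sub_delay hc (hlip bot) (hτ0 top bot t) (hτD t ht))
    (fun t ht => sub_delay_le_mul_sub hc hsc (hlip bot) (hτ0 top bot t) (hτD t ht))
  have htop := sum_mul_le_of_nonpos hψnn (fun j => sub_nonpos.2 (hub t ht j)) bot
  have hbot : 0 ≤ ∑ j, ψ |x j (t - τ bot j t) - x bot t| * (x j (t - τ bot j t) - x bot t) :=
    Finset.sum_nonneg fun j _ => mul_nonneg (hψnn _ (abs_nonneg _)) (sub_nonneg.2 (hlb t ht j))
  rw [abs_of_nonpos (sub_nonpos.2 (hub t ht bot)), neg_sub] at htop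
  linarith [mul_le_mul_of_nonneg_left htop hκ.le, mul_nonneg hκ.le hbot]
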